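/- arXiv:2112.10642 — 2 statements merged into one kernel-verified Lean document; each statement's English description precedes it below -/
import Mathlib

section
/- Let K : Λ² → ℂ be a kernel of the form K(x,y) = (∑_{j=1}^k f_j(x) g_j(y))/(x−y) with ∑_{j=1}^k f_j(x) g_j(x) = 0 for all x. Fix v ∈ Λ with K(v,v) ≠ 0, and define f_{v,j}(x) = f_j(x) − (K(x,v)/K(v,v)) f_j(v) and g_{v,j}(y) = g_j(y) − (K(v,y)/K(v,v)) g_j(v). Then for all x ≠ y with x,y ≠ v, (x−y)·K_v(x,y) = ∑_{j=1}^k f_{v,j}(x) g_{v,j}(y), where K_v(x,y) = K(x,y) − K(x,v)K(v,y)/K(v,v). In particular the one-point Palm kernel is again k-integrable. -/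
open Finset

/-- One-point Palm kernel of a `k`-integrable kernel is again `k`-integrable:
the deformed functions `f_v, g_v` reproduce `(x-y) * K_v x y`. -/
theorem palm_kernel_integrable
    (k : ℕ) (f g : Fin k → ℂ → ℂ) (K : ℂ → ℂ → ℂ)
    (hK : ∀ x y : ℂ, x ≠ y → K x y = (∑ j, f j x * g j y) / (x - y))
    (hcancel : ∀ x : ℂ, ∑ j, f j x * g j x = 0)
    (v : ℂ) (hv : K v v ≠ 0)
    (fv gv : Fin k → ℂ → ℂ)
    (hfv : ∀ j x, fv j x = f j x - (K x v / K v v) * f j v)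
    (hgv : ∀ j y, gv j y = g j y - (K v y / K v v) * g j v)
    (x y : ℂ) (hxy : x ≠ y) (hx : x ≠ v) (hy : y ≠ v) :
    (x - y) * (K x y - K x v * K v y / K v v) = ∑ j, fv j x * gv j y := by
  have sum_eq : ∀ a b : ℂ, a ≠ b → ∑ j, f j a * g j b = (a - b) * K a b := by
    intro a b hab
    rw [hK a b hab, mul_div_cancel₀ _ (sub_ne_zero.mpr hab)]
  have e1 : ∑ j, f j x * g j y = (x - y) * K x y := sum_eq x y hxy
  have e2 : ∑ j, f j x * g j v = (x - v) * K x v := sum_eq x v hx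
  have e3 : ∑ j, f j v * g j y = (v - y) * K v y := sum_eq v y (fun h => hy h.symm)
  have e4 : ∑ j, f j v * g j v = 0 := hcancel v
  have expand : ∑ j, fv j x * gv j y
      = (∑ j, f j x * g j y) - (K v y / K v v) * (∑ j, f j x * g j v)
        - (K x v / K v v) * (∑ j, f j v * g j y)
        + (K x v / K v v) * (K v y / K v v) * (∑ j, f j v * g j v) := by
    simp only [hfv, hgv, Finset.mul_sum, ← Finset.sum_sub_distrib, ← Finset.sum_add_distrib]
    apply Finset.sum_congr rfl
    intro j _
    ring
  rw [expand, e1, e2, e3, e4]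
  field_simp
  ring
end

section
/- With K k-integrable as above (∑_j f_j g_j ≡ 0) and K(v,v) ≠ 0, the deformed functions f_{v,j}(x) = f_j(x) − (K(x,v)/K(v,v)) f_j(v), g_{v,j}(x) = g_j(x) − (K(v,x)/K(v,v)) g_j(v) again satisfy the cancellation condition ∑_{j=1}^k f_{v,j}(x) g_{v,j}(x) = 0 for all x ≠ v. -/
open Finset

/-- The deformed functions of the one-point Palm kernel again satisfy the
integrable-kernel cancellation condition `∑ j, f_{v,j}(x) g_{v,j}(x) = 0`. -/
theorem palm_kernel_cancellation
    (k : ℕ) (f g : Fin k → ℂ → ℂ) (K : ℂ → ℂ → ℂ)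
    (hK : ∀ x y : ℂ, x ≠ y → K x y = (∑ j, f j x * g j y) / (x - y))
    (hcancel : ∀ x : ℂ, ∑ j, f j x * g j x = 0)
    (v : ℂ) (hv : K v v ≠ 0)
    (fv gv : Fin k → ℂ → ℂ)
    (hfv : ∀ j x, fv j x = f j x - (K x v / K v v) * f j v)
    (hgv : ∀ j x, gv j x = g j x - (K v x / K v v) * g j v)
    (x : ℂ) (hx : x ≠ v) :
    ∑ j, fv j x * gv j x = 0 := by
  have hxv : x - v ≠ 0 := sub_ne_zero.mpr hx
  have hS1 : ∑ j, f j x * g j v = K x v * (x - v) := by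
    rw [hK x v hx]; field_simp
  have hS2 : ∑ j, f j v * g j x = K v x * (v - x) := by
    rw [hK v x hx.symm, div_mul_cancel₀ _ (sub_ne_zero.mpr hx.symm)]
  have expand : ∑ j, fv j x * gv j x =
      (∑ j, f j x * g j x) - (K v x / K v v) * (∑ j, f j x * g j v)
        - (K x v / K v v) * (∑ j, f j v * g j x)
        + (K x v / K v v) * (K v x / K v v) * (∑ j, f j v * g j v) := by
    simp only [hfv, hgv, Finset.mul_sum, ← Finset.sum_sub_distrib, ← Finset.sum_add_distrib]
    exact Finset.sum_congr rfl fun j _ => by ring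
  rw [expand, hcancel, hcancel, hS1, hS2]
  field_simp
  ring
end
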